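/- arXiv:2302.05579 — 5 statements merged into one kernel-verified Lean document; each statement's English description precedes it below -/
import Mathlib

section
/- With the notation above, the following identities hold in A: τ·c₁c₃⁻¹·τ = (zv)²·H; τ² = (v²−1)·τ; τ·c₁·τ = −z·τ; C = c₁c₃⁻¹ + z·c₁; and τ·C·τ = (zv)²·H − z²·τ. -/
/- R = ℤ[v^{±1}, z^{±1}] modelled as the group algebra of ℤ × ℤ over ℤ:
   the coefficient of v^i z^j in P is `P (i, j)`. -/
noncomputable section

abbrev R2 : Type := AddMonoidAlgebra ℤ (ℤ × ℤ)

/-- `v` -/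
def V : R2 := AddMonoidAlgebra.single (1, 0) 1
/-- `v⁻¹` -/
def Vi : R2 := AddMonoidAlgebra.single (-1, 0) 1
/-- `z` -/
def Z : R2 := AddMonoidAlgebra.single (0, 1) 1
/-- `z⁻¹` -/
def Zi : R2 := AddMonoidAlgebra.single (0, -1) 1
/-- `δ = (v⁻¹ - v) z⁻¹` -/
def δR : R2 := (Vi - V) * Zi

variable {A : Type*} [Ring A] [Algebra R2 A]

/-- `c = v⁻¹ σ` -/
def cOf (σ : Aˣ) : A := Vi • (σ : A)
/-- `c⁻¹ = v σ⁻¹` -/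
def cInvOf (σ : Aˣ) : A := V • ((σ⁻¹ : Aˣ) : A)
/-- `C = c₁ c₃` -/
def COf (σ₁ σ₃ : Aˣ) : A := cOf σ₁ * cOf σ₃
/-- `τ = (-zv) h` -/
def τOf (h : A) : A := (-(Z * V)) • h

lemma hVVi : V * Vi = 1 := by
  rw [V, Vi, AddMonoidAlgebra.single_mul_single]; norm_num; rfl

lemma hZZi : Z * Zi = 1 := by
  rw [Z, Zi, AddMonoidAlgebra.single_mul_single]; norm_num; rfl

theorem statement0 (A : Type*) [Ring A] [Algebra R2 A]
    (σ₁ σ₃ : Aˣ) (h H : A)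
    (hcomm : (σ₁ : A) * σ₃ = (σ₃ : A) * σ₁)
    (hskein1 : Vi • (σ₁ : A) - V • ((σ₁⁻¹ : Aˣ) : A) = Z • (1 : A))
    (hskein3 : Vi • (σ₃ : A) - V • ((σ₃⁻¹ : Aˣ) : A) = Z • (1 : A))
    (hH1 : (σ₁ : A) * H = (σ₃ : A) * H)
    (hH2 : H * (σ₁ : A) = H * (σ₃ : A))
    (hHdef : H = h * (σ₁ : A) * ((σ₃⁻¹ : Aˣ) : A) * h)
    (hh2 : h * h = δR • h)
    (hh : h * (σ₁ : A) * h = h) :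
    τOf h * (cOf σ₁ * cInvOf σ₃) * τOf h = ((Z * V) ^ 2) • H ∧
    τOf h * τOf h = (V ^ 2 - 1) • τOf h ∧
    τOf h * cOf σ₁ * τOf h = (-Z) • τOf h ∧
    COf σ₁ σ₃ = cOf σ₁ * cInvOf σ₃ + Z • cOf σ₁ ∧
    τOf h * COf σ₁ σ₃ * τOf h = ((Z * V) ^ 2) • H - (Z ^ 2) • τOf h := by
  have p1 : τOf h * (cOf σ₁ * cInvOf σ₃) * τOf h = ((Z * V) ^ 2) • H := by
    rw [hHdef]
    simp only [τOf, cOf, cInvOf, smul_mul_assoc, mul_smul_comm, smul_smul, ← mul_assoc]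
    congr 1
    linear_combination (Z * V) ^ 2 * hVVi
  have p2 : τOf h * τOf h = (V ^ 2 - 1) • τOf h := by
    simp only [τOf, smul_mul_assoc, mul_smul_comm, smul_smul]
    rw [hh2, smul_smul]
    congr 1
    rw [δR]
    linear_combination Z * V * (Z * Zi) * hVVi + Z * V * hZZi - Z * V ^ 3 * hZZi
  have p3 : τOf h * cOf σ₁ * τOf h = (-Z) • τOf h := by
    simp only [τOf, cOf, smul_mul_assoc, mul_smul_comm, smul_smul, ← mul_assoc]
    rw [hh]
    congr 1
    linear_combination Z ^ 2 * V * hVVi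
  have p4 : COf σ₁ σ₃ = cOf σ₁ * cInvOf σ₃ + Z • cOf σ₁ := by
    have h3 : Vi • (σ₃ : A) = V • ((σ₃⁻¹ : Aˣ) : A) + Z • (1 : A) := by
      rw [← hskein3]; abel
    rw [COf, show cOf σ₃ = Vi • (σ₃ : A) from rfl, h3]
    simp [mul_add, mul_smul_comm, cInvOf]
  have p5 : τOf h * COf σ₁ σ₃ * τOf h = ((Z * V) ^ 2) • H - (Z ^ 2) • τOf h := by
    rw [p4, mul_add, add_mul, p1]
    have : τOf h * (Z • cOf σ₁) * τOf h = Z • (τOf h * cOf σ₁ * τOf h) := by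
      rw [mul_smul_comm, smul_mul_assoc]
    rw [this, p3, smul_smul, sub_eq_add_neg, ← neg_smul]
    congr 2
    ring
  exact ⟨p1, p2, p3, p4, p5⟩
end
end

section
/- With the notation above, for every natural number m ≥ 0 one has H·(Cτ)^m = (v²−1−z²)^m·H in A. -/
/- R = ℤ[v^{±1}, z^{±1}] modelled as the group algebra of ℤ × ℤ over ℤ:
   the coefficient of v^i z^j in P is `P (i, j)`. -/
noncomputable section

variable {A : Type*} [Ring A] [Algebra R2 A]

lemma VVi : V * Vi = (1 : R2) := by
  rw [V, Vi, AddMonoidAlgebra.single_mul_single]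
  norm_num
  rfl

lemma ZZi : Z * Zi = (1 : R2) := by
  rw [Z, Zi, AddMonoidAlgebra.single_mul_single]
  norm_num
  rfl

lemma scalar_key : (Vi * Vi * -(Z * V)) * (V * Z + (V * V) * δR) = V ^ 2 - 1 - Z ^ 2 := by
  have h1 : V * Vi = 1 := VVi
  have h2 : Z * Zi = 1 := ZZi
  rw [δR]
  linear_combination (-(Z^2*(V*Vi+1)) - ((V*Vi)^2 + V*Vi + 1) + V^2*(V*Vi+1)) * h1
    + (V^2*(V*Vi)^2 - (V*Vi)^3) * h2

theorem statement3 (A : Type*) [Ring A] [Algebra R2 A]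
    (σ₁ σ₃ : Aˣ) (h H : A)
    (hcomm : (σ₁ : A) * σ₃ = (σ₃ : A) * σ₁)
    (hskein1 : Vi • (σ₁ : A) - V • ((σ₁⁻¹ : Aˣ) : A) = Z • (1 : A))
    (hskein3 : Vi • (σ₃ : A) - V • ((σ₃⁻¹ : Aˣ) : A) = Z • (1 : A))
    (hH1 : (σ₁ : A) * H = (σ₃ : A) * H)
    (hH2 : H * (σ₁ : A) = H * (σ₃ : A))
    (hHdef : H = h * (σ₁ : A) * ((σ₃⁻¹ : Aˣ) : A) * h)
    (hh2 : h * h = δR • h)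
    (hh : h * (σ₁ : A) * h = h)
    (m : ℕ) :
    H * (COf σ₁ σ₃ * τOf h) ^ m = ((V ^ 2 - 1 - Z ^ 2) ^ m) • H := by
  have hs3i : ((σ₃⁻¹ : Aˣ) : A) * σ₃ = 1 := σ₃.inv_mul
  have hs3eq : (σ₃ : A) = (V * Z) • (1 : A) + (V * V) • ((σ₃⁻¹ : Aˣ) : A) := by
    have e : Vi • (σ₃ : A) = Z • (1 : A) + V • ((σ₃⁻¹ : Aˣ) : A) := by
      rw [← hskein3]; abel
    calc (σ₃ : A) = (V * Vi) • (σ₃ : A) := by rw [VVi, one_smul]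
      _ = V • (Vi • (σ₃ : A)) := by rw [mul_smul]
      _ = V • (Z • (1 : A) + V • ((σ₃⁻¹ : Aˣ) : A)) := by rw [e]
      _ = (V * Z) • (1 : A) + (V * V) • ((σ₃⁻¹ : Aˣ) : A) := by
          rw [smul_add, smul_smul, smul_smul]
  have hs33 : (σ₃ : A) * σ₃ = (V * Z) • (σ₃ : A) + (V * V) • (1 : A) := by
    calc (σ₃ : A) * σ₃ = ((V * Z) • (1 : A) + (V * V) • ((σ₃⁻¹ : Aˣ) : A)) * σ₃ := by
          rw [← hs3eq]
      _ = (V * Z) • (σ₃ : A) + (V * V) • (((σ₃⁻¹ : Aˣ) : A) * σ₃) := by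
          rw [add_mul, smul_mul_assoc, smul_mul_assoc, one_mul]
      _ = (V * Z) • (σ₃ : A) + (V * V) • (1 : A) := by rw [hs3i]
  have hHh : H * h = δR • H := by
    calc H * h = h * σ₁ * ↑σ₃⁻¹ * (h * h) := by rw [hHdef, mul_assoc]
      _ = h * σ₁ * ↑σ₃⁻¹ * (δR • h) := by rw [hh2]
      _ = δR • (h * σ₁ * ↑σ₃⁻¹ * h) := by rw [mul_smul_comm]
      _ = δR • H := by rw [← hHdef]
  have hHs1h : H * σ₁ * h = H := by
    calc H * σ₁ * h = h * σ₁ * ↑σ₃⁻¹ * (h * σ₁ * h) := by rw [hHdef]; noncomm_ring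
      _ = h * σ₁ * ↑σ₃⁻¹ * h := by rw [hh]
      _ = H := hHdef.symm
  have hHs3h : H * σ₃ * h = H := by rw [← hH2]; exact hHs1h
  have e1 : H * ((σ₁ : A) * σ₃ * h) = (V * Z + (V * V) * δR) • H := by
    calc H * ((σ₁ : A) * σ₃ * h) = (H * σ₁) * σ₃ * h := by noncomm_ring
      _ = H * ((σ₃ : A) * σ₃) * h := by rw [hH2, mul_assoc]; noncomm_ring
      _ = H * ((V * Z) • (σ₃ : A) + (V * V) • (1 : A)) * h := by rw [hs33]
      _ = (V * Z) • (H * σ₃ * h) + (V * V) • (H * h) := by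
          rw [mul_add, add_mul]
          simp only [mul_smul_comm, smul_mul_assoc, mul_one]
      _ = (V * Z) • H + (V * V) • (δR • H) := by rw [hHs3h, hHh]
      _ = (V * Z + (V * V) * δR) • H := by rw [smul_smul, add_smul]
  have key : H * (COf σ₁ σ₃ * τOf h) = (V ^ 2 - 1 - Z ^ 2) • H := by
    calc H * (COf σ₁ σ₃ * τOf h)
        = (Vi * Vi * -(Z * V)) • (H * ((σ₁ : A) * σ₃ * h)) := by
          simp only [COf, cOf, τOf, smul_mul_assoc, mul_smul_comm, smul_smul, smul_neg,
            neg_smul, mul_neg, neg_neg, mul_assoc]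
          rw [show Z * (V * (Vi * Vi)) = Vi * (Vi * (Z * V)) from by ring]
      _ = (Vi * Vi * -(Z * V)) • ((V * Z + (V * V) * δR) • H) := by rw [e1]
      _ = (V ^ 2 - 1 - Z ^ 2) • H := by rw [smul_smul, scalar_key]
  induction m with
  | zero => simp
  | succ n ih =>
    rw [pow_succ, ← mul_assoc, ih, smul_mul_assoc, key, smul_smul, ← pow_succ]
end
end

section
/- With the notation above, ev(Cτ) = 1 − v^{-2}, and for every integer n ≥ 2, ev((Cτ)^n) = (v²−1)·(v²−1−z²)^{n−1} − z²·ev((Cτ)^{n−1}). -/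
/- R = ℤ[v^{±1}, z^{±1}] modelled as the group algebra of ℤ × ℤ over ℤ:
   the coefficient of v^i z^j in P is `P (i, j)`. -/
noncomputable section

variable {A : Type*} [Ring A] [Algebra R2 A]

theorem statement8 (A : Type*) [Ring A] [Algebra R2 A]
    (σ₁ σ₃ : Aˣ) (h H : A)
    (hcomm : (σ₁ : A) * σ₃ = (σ₃ : A) * σ₁)
    (hskein1 : Vi • (σ₁ : A) - V • ((σ₁⁻¹ : Aˣ) : A) = Z • (1 : A))
    (hskein3 : Vi • (σ₃ : A) - V • ((σ₃⁻¹ : Aˣ) : A) = Z • (1 : A))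
    (hH1 : (σ₁ : A) * H = (σ₃ : A) * H)
    (hH2 : H * (σ₁ : A) = H * (σ₃ : A))
    (hHdef : H = h * (σ₁ : A) * ((σ₃⁻¹ : Aˣ) : A) * h)
    (hh2 : h * h = δR • h)
    (hh : h * (σ₁ : A) * h = h)
    (ev : A →ₗ[R2] R2)
    (htrace : ∀ x y : A, ev (x * y) = ev (y * x))
    (hev1 : ev 1 = δR ^ 4)
    (hevσ₁ : ev (σ₁ : A) = δR ^ 3)
    (hevσ₃ : ev (σ₃ : A) = δR ^ 3)
    (hevh : ev h = δR ^ 3)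
    (hevσ₁σ₃ : ev ((σ₁ : A) * σ₃) = δR ^ 2)
    (hevσ₁h : ev ((σ₁ : A) * h) = δR ^ 2)
    (hevσ₃h : ev ((σ₃ : A) * h) = δR ^ 2)
    (hevH : ev H = δR ^ 2)
    (hevσ₁σ₃h : ev ((σ₁ : A) * σ₃ * h) = δR)
    (hevσ₁H : ev ((σ₁ : A) * H) = δR)
    :
    ev (COf σ₁ σ₃ * τOf h) = 1 - Vi ^ 2 ∧
    ∀ n : ℕ, 2 ≤ n →
      ev ((COf σ₁ σ₃ * τOf h) ^ n) =
        (V ^ 2 - 1) * (V ^ 2 - 1 - Z ^ 2) ^ (n - 1)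
          - Z ^ 2 * ev ((COf σ₁ σ₃ * τOf h) ^ (n - 1)) := by

  classical
  have hv : V * Vi = (1:R2) := by
    rw [V, Vi, AddMonoidAlgebra.single_mul_single]
    norm_num
    exact AddMonoidAlgebra.one_def.symm
  have hz : Z * Zi = (1:R2) := by
    rw [Z, Zi, AddMonoidAlgebra.single_mul_single]
    norm_num
    exact AddMonoidAlgebra.one_def.symm
  have hδ : δR = (Vi - V) * Zi := rfl
  set S1 : A := (σ₁ : A) with hS1def
  set S3 : A := (σ₃ : A) with hS3def
  set I1 : A := ((σ₁⁻¹ : Aˣ) : A) with hI1def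
  set I3 : A := ((σ₃⁻¹ : Aˣ) : A) with hI3def
  set X : A := S1 * S3 * h with hXdef
  set lam : R2 := V * Z + V * V * δR with hlam
  set μ : R2 := -(Z * Vi) with hμ
  clear_value S1 S3 I1 I3 X lam μ
  -- skein expansions
  have hexp1 : S1 = (V*V) • I1 + (V*Z) • (1:A) := by
    have h1 := congrArg (fun x : A => V • x) hskein1
    simp only [smul_sub, smul_smul, hv, one_smul] at h1
    rw [sub_eq_iff_eq_add] at h1
    rw [h1, add_comm]
  have hexp3 : S3 = (V*V) • I3 + (V*Z) • (1:A) := by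
    have h1 := congrArg (fun x : A => V • x) hskein3
    simp only [smul_sub, smul_smul, hv, one_smul] at h1
    rw [sub_eq_iff_eq_add] at h1
    rw [h1, add_comm]
  have hmulinv1 : S1 * I1 = 1 := by rw [hS1def, hI1def]; exact σ₁.mul_inv
  have hsq1 : S1 * S1 = (V*Z) • S1 + (V*V) • (1:A) := by
    calc S1 * S1 = S1 * ((V*V) • I1 + (V*Z) • 1) := by rw [← hexp1]
    _ = (V*V) • (S1*I1) + (V*Z) • S1 := by
        simp only [mul_add, mul_smul_comm, mul_one]
    _ = (V*Z) • S1 + (V*V) • 1 := by rw [hmulinv1, add_comm]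
  have hstep3 : h * S1 * S3 * h = (V*V) • H + (V*Z) • h := by
    calc h * S1 * S3 * h = h * S1 * ((V*V) • I3 + (V*Z) • 1) * h := by rw [← hexp3]
    _ = (V*V) • (h * S1 * I3 * h) + (V*Z) • (h * S1 * h) := by
        simp only [mul_add, add_mul, mul_smul_comm, smul_mul_assoc, mul_one]
    _ = (V*V) • H + (V*Z) • h := by rw [← hHdef, hh]
  have hHh : H * h = δR • H := by
    calc H * h = h * S1 * I3 * (h * h) := by rw [hHdef, mul_assoc]
    _ = h * S1 * I3 * (δR • h) := by rw [hh2]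
    _ = δR • (h * S1 * I3 * h) := by rw [mul_smul_comm]
    _ = δR • H := by rw [← hHdef]
  have hHS1h : H * S1 * h = H := by
    have e : h * S1 * I3 * h * S1 * h = h * S1 * I3 * (h * S1 * h) := by
      simp only [mul_assoc]
    rw [hHdef, e, hh]
  have hHSS : H * S1 * S3 = H * S1 * S1 := by
    calc H * S1 * S3 = H * (S1 * S3) := by rw [mul_assoc]
    _ = H * (S3 * S1) := by rw [hcomm]
    _ = H * S3 * S1 := by rw [mul_assoc]
    _ = H * S1 * S1 := by rw [← hH2]
  have hHX : H * X = lam • H := by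
    calc H * X = H * S1 * S3 * h := by simp only [hXdef, mul_assoc]
    _ = H * (S1 * S1) * h := by rw [hHSS]; simp only [mul_assoc]
    _ = H * ((V*Z) • S1 + (V*V) • 1) * h := by rw [hsq1]
    _ = (V*Z) • (H * S1 * h) + (V*V) • (H * h) := by
        simp only [mul_add, add_mul, mul_smul_comm, smul_mul_assoc, mul_one]
    _ = (V*Z) • H + (V*V) • (δR • H) := by rw [hHS1h, hHh]
    _ = lam • H := by rw [smul_smul, ← add_smul, ← hlam]
  have hHXk : ∀ k : ℕ, H * X ^ k = lam ^ k • H := by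
    intro k
    induction k with
    | zero => simp
    | succ n ih =>
      rw [pow_succ, ← mul_assoc, ih, smul_mul_assoc, hHX, smul_smul, pow_succ]
  have hSSH : S1 * S3 * H = (V*Z) • (S1*H) + (V*V) • H := by
    calc S1 * S3 * H = S1 * (S3 * H) := by rw [mul_assoc]
    _ = S1 * (S1 * H) := by rw [← hH1]
    _ = S1 * S1 * H := by rw [mul_assoc]
    _ = ((V*Z) • S1 + (V*V) • 1) * H := by rw [hsq1]
    _ = (V*Z) • (S1*H) + (V*V) • H := by
        simp only [add_mul, smul_mul_assoc, one_mul]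
  have hXsq : X * X = (V*Z) • X + ((V*V)*(V*Z)) • (S1*H) + ((V*V)*(V*V)) • H := by
    calc X * X = S1 * S3 * (h * S1 * S3 * h) := by simp only [hXdef, mul_assoc]
    _ = S1 * S3 * ((V*V) • H + (V*Z) • h) := by rw [hstep3]
    _ = (V*V) • (S1 * S3 * H) + (V*Z) • X := by
        simp only [mul_add, mul_smul_comm, hXdef, mul_assoc]
    _ = (V*V) • ((V*Z) • (S1*H) + (V*V) • H) + (V*Z) • X := by rw [hSSH]
    _ = (V*Z) • X + ((V*V)*(V*Z)) • (S1*H) + ((V*V)*(V*V)) • H := by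
        simp only [smul_add, smul_smul]
        abel
  have hevXkH : ∀ k : ℕ, ev (X ^ k * H) = lam ^ k * δR ^ 2 := by
    intro k
    rw [htrace, hHXk, map_smul, hevH, smul_eq_mul]
  have hevXkS1H : ∀ k : ℕ, ev (X ^ k * (S1 * H)) = lam ^ k * δR := by
    intro k
    rw [htrace]
    have e : S1 * H * X ^ k = lam ^ k • (S1 * H) := by
      rw [mul_assoc, hHXk, mul_smul_comm]
    rw [e, map_smul, hevσ₁H, smul_eq_mul]
  have hrec : ∀ k : ℕ, ev (X ^ (k+2))
      = (V*Z) * ev (X ^ (k+1))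
        + lam ^ k * (((V*V)*(V*Z)) * δR + ((V*V)*(V*V)) * δR ^ 2) := by
    intro k
    have e1 : X ^ (k+2) = X ^ k * (X * X) := by rw [pow_add, pow_two]
    rw [e1, hXsq]
    simp only [mul_add, mul_smul_comm, map_add, map_smul, smul_eq_mul]
    rw [show X ^ k * X = X ^ (k+1) from (pow_succ X k).symm, hevXkH, hevXkS1H]
    ring
  have hXc : S1 * (S3 * h) = X := by rw [hXdef, mul_assoc]
  have hCτ : COf σ₁ σ₃ * τOf h = μ • X := by
    rw [COf, cOf, cOf, τOf]
    rw [← hS1def, ← hS3def]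
    simp only [smul_mul_assoc, mul_smul_comm, smul_smul, mul_assoc, hXc]
    congr 1
    rw [hμ]
    linear_combination (-(Vi*Z)) * hv
  have hevn : ∀ n : ℕ, ev ((COf σ₁ σ₃ * τOf h) ^ n) = μ ^ n * ev (X ^ n) := by
    intro n
    rw [hCτ, smul_pow, map_smul, smul_eq_mul]
  constructor
  · have e := hevn 1
    rw [pow_one, pow_one] at e
    rw [e, pow_one, hevσ₁σ₃h, hμ, hδ]
    linear_combination (Z*Zi) * hv + (1 - Vi^2) * hz
  · intro n hn
    obtain ⟨k, rfl⟩ : ∃ k, n = k + 2 := ⟨n - 2, by omega⟩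
    have hk1 : k + 2 - 1 = k + 1 := rfl
    rw [hk1, hevn, hevn, hrec k]
    have hC : μ * (V*Z) = -(Z^2) := by
      rw [hμ]
      linear_combination (-(Z^2)) * hv
    have hD : μ * lam = V^2 - 1 - Z^2 := by
      rw [hμ, hlam, hδ]
      linear_combination (-(Z*Zi) - Z^2 - V*Vi*Z*Zi + V^2*Z*Zi) * hv + (-1 + V^2) * hz
    have hE : μ^2 * (((V*V)*(V*Z)) * δR + ((V*V)*(V*V)) * δR ^ 2)
        = (V^2-1) * (V^2-1-Z^2) := by
      rw [hμ, hδ]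
      linear_combination (Z^2*Zi^2 + Z^3*Zi + V*Vi*Z^2*Zi^2 + V*Vi*Z^3*Zi - 2*V^2*Z^2*Zi^2
          - V^2*Z^3*Zi + V^2*Vi^2*Z^2*Zi^2 + V^2*Vi^2*Z^3*Zi - 2*V^3*Vi*Z^2*Zi^2
          - V^3*Vi*Z^3*Zi + V^3*Vi^3*Z^2*Zi^2 + V^4*Z^2*Zi^2 - 2*V^4*Vi^2*Z^2*Zi^2
          + V^5*Vi*Z^2*Zi^2) * hv
        + (1 + Z*Zi + Z^2 - 2*V^2 - 2*V^2*Z*Zi - V^2*Z^2 + V^4 + V^4*Z*Zi) * hz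
    calc μ ^ (k+2) * ((V*Z) * ev (X ^ (k+1))
            + lam ^ k * (((V*V)*(V*Z)) * δR + ((V*V)*(V*V)) * δR ^ 2))
        = (μ * (V*Z)) * (μ ^ (k+1) * ev (X ^ (k+1)))
            + (μ * lam) ^ k * (μ ^ 2 * (((V*V)*(V*Z)) * δR + ((V*V)*(V*V)) * δR ^ 2)) := by
          rw [mul_pow]
          ring
      _ = (V ^ 2 - 1) * (V ^ 2 - 1 - Z ^ 2) ^ (k + 1)
            - Z ^ 2 * (μ ^ (k + 1) * ev (X ^ (k + 1))) := by
          rw [hC, hD, hE]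
          ring
end
end

section
/- With the notation above, for every natural number n ≥ 0 one has ev(C^n) = (a_n·δ² + b_n·v^{-1}·δ)². In particular, every monomial occurring in ev(C^n) has v-exponent at most 4. -/
/- R = ℤ[v^{±1}, z^{±1}] modelled as the group algebra of ℤ × ℤ over ℤ:
   the coefficient of v^i z^j in P is `P (i, j)`. -/
noncomputable section

variable {A : Type*} [Ring A] [Algebra R2 A]

/-- `(a_r, b_r)`: a₀ = 1, b₀ = 0, a_{r+1} = b_r, b_{r+1} = a_r + z b_r. -/
def abP : ℕ → R2 × R2
  | 0 => (1, 0)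
  | r + 1 => ((abP r).2, (abP r).1 + Z * (abP r).2)

def aP (r : ℕ) : R2 := (abP r).1
def bP (r : ℕ) : R2 := (abP r).2

/-!
Both `c₁` and `c₃` satisfy `c² = z c + 1` by the skein relation, so `cⁿ = aₙ + bₙ c`. As `c₁` and
`c₃` commute, `Cⁿ = c₁ⁿ c₃ⁿ = aₙ² + aₙbₙ (c₁ + c₃) + bₙ² c₁c₃`, and linearity of `ev` gives
`aₙ²δ⁴ + 2aₙbₙ v⁻¹δ³ + bₙ² v⁻²δ²`, a perfect square. Its base has `v`-degree at most `2`, since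
`aₙ, bₙ ∈ ℤ[z]` and `δ` has `v`-degree `1`.
-/

lemma Vi_mul_V : Vi * V = 1 := by
  rw [Vi, V, AddMonoidAlgebra.single_mul_single]
  norm_num
  rfl

lemma cOf_mul_cInvOf (σ : Aˣ) : cOf σ * cInvOf σ = 1 := by
  rw [cOf, cInvOf, smul_mul_smul, Units.mul_inv, Vi_mul_V, one_smul]

-- The skein relation reads `c - c⁻¹ = z`.
lemma cOf_mul_self_of_skein {σ : Aˣ} (hσ : Vi • (σ : A) - V • ((σ⁻¹ : Aˣ) : A) = Z • (1 : A)) :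
    cOf σ * cOf σ = Z • cOf σ + 1 := by
  have hc : cOf σ = cInvOf σ + Z • (1 : A) := by
    rw [cOf, cInvOf, ← hσ, add_sub_cancel]
  calc cOf σ * cOf σ = cOf σ * (cInvOf σ + Z • (1 : A)) := by rw [← hc]
    _ = Z • cOf σ + 1 := by rw [mul_add, cOf_mul_cInvOf, mul_smul_comm, mul_one, add_comm]

lemma aP_succ (r : ℕ) : aP (r + 1) = bP r := rfl

lemma bP_succ (r : ℕ) : bP (r + 1) = aP r + Z * bP r := rfl

lemma pow_eq_aP_smul_add_bP_smul {x : A} (hx : x * x = Z • x + 1) (m : ℕ) :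
    x ^ m = aP m • (1 : A) + bP m • x := by
  induction m with
  | zero => simp [aP, bP, abP]
  | succ r ih =>
    rw [pow_succ, ih, aP_succ, bP_succ, add_mul, smul_mul_assoc, smul_mul_assoc, one_mul, hx]
    module

lemma commute_cOf {σ₁ σ₃ : Aˣ} (hcomm : (σ₁ : A) * σ₃ = (σ₃ : A) * σ₁) :
    Commute (cOf σ₁) (cOf σ₃) := by
  simp only [Commute, SemiconjBy, cOf, smul_mul_smul, hcomm]

lemma map_mul_pow_of_quadratic (ev : A →ₗ[R2] R2) {x y : A} (hxy : Commute x y)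
    (hx : x * x = Z • x + 1) (hy : y * y = Z • y + 1) (n : ℕ) :
    ev ((x * y) ^ n) = aP n ^ 2 * ev 1 + aP n * bP n * (ev x + ev y) + bP n ^ 2 * ev (x * y) := by
  rw [hxy.mul_pow, pow_eq_aP_smul_add_bP_smul hx, pow_eq_aP_smul_add_bP_smul hy]
  simp only [add_mul, mul_add, smul_mul_smul, one_mul, mul_one, map_add, map_smul, smul_eq_mul]
  ring

lemma ev_COf_pow (ev : A →ₗ[R2] R2) {σ₁ σ₃ : Aˣ}
    (hcomm : (σ₁ : A) * σ₃ = (σ₃ : A) * σ₁)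
    (hskein1 : Vi • (σ₁ : A) - V • ((σ₁⁻¹ : Aˣ) : A) = Z • (1 : A))
    (hskein3 : Vi • (σ₃ : A) - V • ((σ₃⁻¹ : Aˣ) : A) = Z • (1 : A))
    (hev1 : ev 1 = δR ^ 4) (hevσ₁ : ev (σ₁ : A) = δR ^ 3) (hevσ₃ : ev (σ₃ : A) = δR ^ 3)
    (hevσ₁σ₃ : ev ((σ₁ : A) * σ₃) = δR ^ 2) (n : ℕ) :
    ev ((COf σ₁ σ₃) ^ n) = (aP n * δR ^ 2 + bP n * Vi * δR) ^ 2 := by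
  rw [COf, map_mul_pow_of_quadratic ev (commute_cOf hcomm) (cOf_mul_self_of_skein hskein1)
    (cOf_mul_self_of_skein hskein3)]
  simp only [cOf, smul_mul_smul, map_smul, smul_eq_mul, hev1, hevσ₁, hevσ₃, hevσ₁σ₃]
  ring

def vDegree (P : R2) : WithBot ℤ := P.supDegree fun p => (p.1 : WithBot ℤ)

lemma le_vDegree_of_coeff_ne_zero {P : R2} {i j : ℤ} (h : P.coeff (i, j) ≠ 0) :
    (i : WithBot ℤ) ≤ vDegree P :=
  Finset.le_sup (f := fun p : ℤ × ℤ => (p.1 : WithBot ℤ)) (Finsupp.mem_support_iff.2 h)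

lemma vDegree_add_le {P Q : R2} {k : WithBot ℤ} (hP : vDegree P ≤ k) (hQ : vDegree Q ≤ k) :
    vDegree (P + Q) ≤ k :=
  AddMonoidAlgebra.supDegree_add_le.trans (sup_le hP hQ)

lemma vDegree_mul_le {P Q : R2} {k m : WithBot ℤ} (hP : vDegree P ≤ k) (hQ : vDegree Q ≤ m) :
    vDegree (P * Q) ≤ k + m :=
  (AddMonoidAlgebra.supDegree_mul_le (D := fun p : ℤ × ℤ => (p.1 : WithBot ℤ))
    (fun _ _ => WithBot.coe_add _ _)).trans (add_le_add hP hQ)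

lemma vDegree_single_le (i j c : ℤ) : vDegree (AddMonoidAlgebra.single (i, j) c) ≤ i := by
  rw [vDegree, AddMonoidAlgebra.supDegree_single]
  split_ifs <;> simp

lemma vDegree_V : vDegree V ≤ 1 := vDegree_single_le 1 0 1

lemma vDegree_Vi : vDegree Vi ≤ 0 := (vDegree_single_le (-1) 0 1).trans (by norm_num)

lemma vDegree_Z : vDegree Z ≤ 0 := vDegree_single_le 0 1 1

lemma vDegree_Zi : vDegree Zi ≤ 0 := vDegree_single_le 0 (-1) 1

lemma vDegree_δR : vDegree δR ≤ 1 := by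
  have hsub : vDegree (Vi - V) ≤ 1 :=
    AddMonoidAlgebra.supDegree_sub_le.trans (sup_le (vDegree_Vi.trans (by norm_num)) vDegree_V)
  simpa only [δR, add_zero] using vDegree_mul_le hsub vDegree_Zi

lemma vDegree_aP_bP (n : ℕ) : vDegree (aP n) ≤ 0 ∧ vDegree (bP n) ≤ 0 := by
  induction n with
  | zero => exact ⟨vDegree_single_le 0 0 1, by simp [bP, abP, vDegree]⟩
  | succ r ih =>
    refine ⟨ih.2, ?_⟩
    rw [bP_succ]
    exact vDegree_add_le ih.1 (by simpa only [zero_add] using vDegree_mul_le vDegree_Z ih.2)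

lemma vDegree_aP_bP_square_le (n : ℕ) : vDegree ((aP n * δR ^ 2 + bP n * Vi * δR) ^ 2) ≤ 4 := by
  obtain ⟨ha, hb⟩ := vDegree_aP_bP n
  have hδ2 : vDegree (δR ^ 2) ≤ 2 := by
    rw [sq]; exact (vDegree_mul_le vDegree_δR vDegree_δR).trans_eq rfl
  have hsum : vDegree (aP n * δR ^ 2 + bP n * Vi * δR) ≤ 2 := by
    refine vDegree_add_le (by simpa only [zero_add] using vDegree_mul_le ha hδ2) ?_
    have := vDegree_mul_le (vDegree_mul_le hb vDegree_Vi) vDegree_δR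
    exact this.trans (by norm_num)
  rw [sq]; exact (vDegree_mul_le hsum hsum).trans_eq rfl

theorem statement10_general (A : Type*) [Ring A] [Algebra R2 A]
    (σ₁ σ₃ : Aˣ)
    (hcomm : (σ₁ : A) * σ₃ = (σ₃ : A) * σ₁)
    (hskein1 : Vi • (σ₁ : A) - V • ((σ₁⁻¹ : Aˣ) : A) = Z • (1 : A))
    (hskein3 : Vi • (σ₃ : A) - V • ((σ₃⁻¹ : Aˣ) : A) = Z • (1 : A))
    (ev : A →ₗ[R2] R2)
    (hev1 : ev 1 = δR ^ 4)
    (hevσ₁ : ev (σ₁ : A) = δR ^ 3)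
    (hevσ₃ : ev (σ₃ : A) = δR ^ 3)
    (hevσ₁σ₃ : ev ((σ₁ : A) * σ₃) = δR ^ 2)
    (n : ℕ) :
    ev ((COf σ₁ σ₃) ^ n) = (aP n * δR ^ 2 + bP n * Vi * δR) ^ 2 ∧
    ∀ i j : ℤ, (ev ((COf σ₁ σ₃) ^ n)).coeff (i, j) ≠ 0 → i ≤ 4 := by
  have hev := ev_COf_pow ev hcomm hskein1 hskein3 hev1 hevσ₁ hevσ₃ hevσ₁σ₃ n
  refine ⟨hev, fun i j hij => ?_⟩
  have hi := (le_vDegree_of_coeff_ne_zero hij).trans (hev ▸ vDegree_aP_bP_square_le n)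
  exact WithBot.coe_le_coe.1 hi

theorem statement10 (A : Type*) [Ring A] [Algebra R2 A]
    (σ₁ σ₃ : Aˣ) (h H : A)
    (hcomm : (σ₁ : A) * σ₃ = (σ₃ : A) * σ₁)
    (hskein1 : Vi • (σ₁ : A) - V • ((σ₁⁻¹ : Aˣ) : A) = Z • (1 : A))
    (hskein3 : Vi • (σ₃ : A) - V • ((σ₃⁻¹ : Aˣ) : A) = Z • (1 : A))
    (hH1 : (σ₁ : A) * H = (σ₃ : A) * H)
    (hH2 : H * (σ₁ : A) = H * (σ₃ : A))
    (hHdef : H = h * (σ₁ : A) * ((σ₃⁻¹ : Aˣ) : A) * h)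
    (hh2 : h * h = δR • h)
    (hh : h * (σ₁ : A) * h = h)
    (ev : A →ₗ[R2] R2)
    (htrace : ∀ x y : A, ev (x * y) = ev (y * x))
    (hev1 : ev 1 = δR ^ 4)
    (hevσ₁ : ev (σ₁ : A) = δR ^ 3)
    (hevσ₃ : ev (σ₃ : A) = δR ^ 3)
    (hevh : ev h = δR ^ 3)
    (hevσ₁σ₃ : ev ((σ₁ : A) * σ₃) = δR ^ 2)
    (hevσ₁h : ev ((σ₁ : A) * h) = δR ^ 2)
    (hevσ₃h : ev ((σ₃ : A) * h) = δR ^ 2)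
    (hevH : ev H = δR ^ 2)
    (hevσ₁σ₃h : ev ((σ₁ : A) * σ₃ * h) = δR)
    (hevσ₁H : ev ((σ₁ : A) * H) = δR)
    (n : ℕ) :
    ev ((COf σ₁ σ₃) ^ n) = (aP n * δR ^ 2 + bP n * Vi * δR) ^ 2 ∧
    ∀ i j : ℤ, (ev ((COf σ₁ σ₃) ^ n)).coeff (i, j) ≠ 0 → i ≤ 4 :=
  statement10_general A σ₁ σ₃ hcomm hskein1 hskein3 ev hev1 hevσ₁ hevσ₃ hevσ₁σ₃ n
end
end

section
/- Define p_n ∈ R for integers n ≥ 1 by p₁ = 1 − v^{-2} and p_n = (v²−1)·(v²−1−z²)^{n−1} − z²·p_{n−1} for n ≥ 2. Then for every n ≥ 2, the coefficient of the monomial v^{2n}z^0 in p_n is 1, and every other monomial occurring in p_n has v-exponent at most 2n−2. -/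
/- R = ℤ[v^{±1}, z^{±1}] modelled as the group algebra of ℤ × ℤ over ℤ:
   the coefficient of v^i z^j in P is `P (i, j)`. -/
noncomputable section

/-- `p₁ = 1 - v⁻²`, and `p_n = (v²-1)(v²-1-z²)^{n-1} - z² p_{n-1}` for `n ≥ 2`
    (the value at `0` is a junk value). -/
def pSeq : ℕ → R2
  | 0 => 0
  | 1 => 1 - Vi ^ 2
  | n + 2 => (V ^ 2 - 1) * (V ^ 2 - 1 - Z ^ 2) ^ (n + 1) - Z ^ 2 * pSeq (n + 1)

/-!
Call `f` *led by `v^d`* when `f - v^d` only has monomials of `v`-degree at most `d - 2`.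
This property is multiplicative, so `(v² - 1)(v² - 1 - z²)^(n-1)` is led by `v^(2n)`.
Since `p_{n-1}` has `v`-degree at most `2(n - 1)` (by the same argument, inductively),
the correction term `z² p_{n-1}` does not disturb this, and `p_n` is led by `v^(2n)`.
-/

open AddMonoidAlgebra

-- Valued in `WithBot ℤ` so that `supDegree vDeg 0 = ⊥`.
def vDeg {G : Type*} (x : ℤ × G) : WithBot ℤ := x.1

lemma vDeg_add {G : Type*} [Add G] (x y : ℤ × G) : vDeg (x + y) = vDeg x + vDeg y := by
  simp [vDeg]

lemma supDegree_single_le_vDeg {k G : Type*} [Semiring k] (a : ℤ × G) (r : k) :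
    (single a r).supDegree vDeg ≤ vDeg a := by
  classical
  rw [supDegree_single]
  split_ifs
  exacts [bot_le, le_rfl]

section LeadsWithVPow

variable {k G : Type*} [Ring k] [AddMonoid G]

def LeadsWithVPow (f : k[ℤ × G]) (d : ℤ) : Prop :=
  (f - single (d, 0) 1).supDegree vDeg ≤ ↑(d - 2)

lemma leadsWithVPow_single (d : ℤ) : LeadsWithVPow (single (d, (0 : G)) (1 : k)) d := by
  rw [LeadsWithVPow, sub_self, supDegree_zero]
  exact bot_le

namespace LeadsWithVPow

variable {f g : k[ℤ × G]} {d e : ℤ}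

lemma coeff_eq_one (hf : LeadsWithVPow f d) : f.coeff (d, 0) = 1 := by
  have hlow : (f - single (d, 0) 1).coeff (d, 0) = 0 :=
    coeff_eq_zero_of_not_le_supDegree fun h => by
      have := h.trans hf
      simp [vDeg] at this
  simpa [coeff_sub, coeff_single, sub_eq_zero] using hlow

lemma le_of_coeff_ne_zero (hf : LeadsWithVPow f d) {x : ℤ × G} (hx : f.coeff x ≠ 0)
    (hxd : x ≠ (d, 0)) : x.1 ≤ d - 2 := by
  have hx' : (f - single (d, 0) 1).coeff x ≠ 0 := by
    simpa [coeff_sub, coeff_single, Finsupp.single_apply, Ne.symm hxd] using hx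
  have : vDeg x ≤ ↑(d - 2) := (Finset.le_sup (Finsupp.mem_support_iff.2 hx')).trans hf
  exact WithBot.coe_le_coe.1 this

lemma supDegree_le (hf : LeadsWithVPow f d) : f.supDegree vDeg ≤ d := by
  have hsplit : f = (f - single (d, 0) 1) + single (d, 0) 1 := (sub_add_cancel _ _).symm
  rw [hsplit]
  refine supDegree_add_le.trans (sup_le (hf.trans ?_) (supDegree_single_le_vDeg _ _))
  exact_mod_cast (by omega : d - 2 ≤ d)

lemma sub (hf : LeadsWithVPow f d) (hg : g.supDegree vDeg ≤ ↑(d - 2)) :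
    LeadsWithVPow (f - g) d := by
  have hsplit : f - g - single (d, 0) 1 = (f - single (d, 0) 1) - g := by abel
  unfold LeadsWithVPow
  rw [hsplit]
  exact supDegree_sub_le.trans (sup_le hf hg)

lemma mul (hf : LeadsWithVPow f d) (hg : LeadsWithVPow g e) : LeadsWithVPow (f * g) (d + e) := by
  set sd : k[ℤ × G] := single (d, 0) 1
  set se : k[ℤ × G] := single (e, 0) 1
  have hsdse : sd * se = single (d + e, 0) 1 := by simp [sd, se, single_mul_single]
  have hsplit : f * g - single (d + e, 0) 1 = (f - sd) * g + sd * (g - se) := by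
    rw [← hsdse]; noncomm_ring
  unfold LeadsWithVPow
  rw [hsplit]
  refine supDegree_add_le.trans (sup_le ?_ ?_)
  · refine (supDegree_mul_le vDeg_add).trans ((add_le_add hf hg.supDegree_le).trans ?_)
    exact_mod_cast (by omega : d - 2 + e ≤ d + e - 2)
  · refine (supDegree_mul_le vDeg_add).trans
      ((add_le_add (supDegree_single_le_vDeg _ _) hg).trans ?_)
    simp only [vDeg]
    exact_mod_cast (by omega : d + (e - 2) ≤ d + e - 2)

lemma pow (hf : LeadsWithVPow f d) (n : ℕ) : LeadsWithVPow (f ^ n) (n * d) := by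
  induction n with
  | zero =>
    rw [pow_zero, Nat.cast_zero, zero_mul, LeadsWithVPow, Prod.mk_zero_zero, ← one_def, sub_self,
      supDegree_zero]
    exact bot_le
  | succ n ih =>
    rw [pow_succ]
    convert ih.mul hf using 1
    push_cast; ring

end LeadsWithVPow

end LeadsWithVPow

lemma V_sq : V ^ 2 = single (2, 0) 1 := by
  simp [V, single_pow]

lemma Z_sq : Z ^ 2 = single (0, 2) 1 := by
  simp [Z, single_pow]

lemma Vi_sq : Vi ^ 2 = single (-2, 0) 1 := by
  simp [Vi, single_pow]

lemma supDegree_single_one_le {a : ℤ × ℤ} {d : ℤ} (h : a.1 ≤ d) :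
    (single a (1 : ℤ)).supDegree vDeg ≤ d :=
  (supDegree_single_le_vDeg a 1).trans (WithBot.coe_le_coe.2 h)

lemma leadsWithVPow_factor : LeadsWithVPow (V ^ 2 - 1 - Z ^ 2) 2 := by
  rw [V_sq, Z_sq, one_def]
  exact ((leadsWithVPow_single 2).sub (supDegree_single_one_le le_rfl)).sub
    (supDegree_single_one_le le_rfl)

lemma leadsWithVPow_V_sq_sub_one : LeadsWithVPow (V ^ 2 - 1) 2 := by
  rw [V_sq, one_def]
  exact (leadsWithVPow_single 2).sub (supDegree_single_one_le le_rfl)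

lemma leadsWithVPow_pSeq_add_two {n : ℕ}
    (h : (pSeq (n + 1)).supDegree vDeg ≤ ↑(2 * (n + 1) : ℤ)) :
    LeadsWithVPow (pSeq (n + 2)) (2 * (n + 2)) := by
  have hmain : LeadsWithVPow ((V ^ 2 - 1) * (V ^ 2 - 1 - Z ^ 2) ^ (n + 1)) (2 * (n + 2)) := by
    convert leadsWithVPow_V_sq_sub_one.mul (leadsWithVPow_factor.pow (n + 1)) using 1
    push_cast; ring
  have hlow : (Z ^ 2 * pSeq (n + 1)).supDegree vDeg ≤ ↑(2 * (n + 2) - 2 : ℤ) := by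
    refine (supDegree_mul_le vDeg_add).trans
      ((add_le_add (Z_sq ▸ supDegree_single_one_le le_rfl) h).trans ?_)
    exact_mod_cast (by omega : 0 + 2 * ((n : ℤ) + 1) ≤ 2 * (n + 2) - 2)
  exact hmain.sub hlow

lemma pSeq_succ_supDegree_le (n : ℕ) :
    (pSeq (n + 1)).supDegree vDeg ≤ ↑(2 * (n + 1) : ℤ) := by
  induction n with
  | zero =>
    rw [pSeq, Vi_sq, one_def]
    exact supDegree_sub_le.trans (sup_le (supDegree_single_one_le (by norm_num))
      (supDegree_single_one_le (by norm_num)))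
  | succ n ih =>
    convert (leadsWithVPow_pSeq_add_two ih).supDegree_le using 2
    push_cast; ring

theorem statement13 (n : ℕ) (hn : 2 ≤ n) :
    (pSeq n).coeff ((2 * n : ℤ), 0) = 1 ∧
    ∀ i j : ℤ, (pSeq n).coeff (i, j) ≠ 0 → (i, j) ≠ ((2 * n : ℤ), 0) →
      i ≤ 2 * n - 2 := by
  obtain ⟨m, rfl⟩ := Nat.exists_eq_add_of_le' hn
  have hlead : LeadsWithVPow (pSeq (m + 2)) (2 * (m + 2 : ℕ)) := by
    exact_mod_cast leadsWithVPow_pSeq_add_two (pSeq_succ_supDegree_le m)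
  exact ⟨hlead.coeff_eq_one, fun i j hij hne => hlead.le_of_coeff_ne_zero hij hne⟩
end
end
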